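/- arXiv:1707.00407 — 6 statements merged into one kernel-verified Lean document; each statement's English description precedes it below -/
import Mathlib

section
/- Let Φ ∈ ℝ^{N×n} with ΦᵀΦ invertible, P positive definite, σ² > 0, Q = ΦPΦᵀ + σ²I_N, S = P + σ²(ΦᵀΦ)^{-1}. Then ΦᵀQ^{-1}Q^{-1}Φ = S^{-1}(ΦᵀΦ)^{-1}S^{-1} (using symmetry of P, Q, S). -/
/-!
Writing `G = ΦᵀΦ`, `Φ` intertwines `Q` with `SG` and `GS`: `QΦ = Φ(SG)` and `ΦᵀQ = (GS)Φᵀ`, because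
`σ²Φ = Φ(σ²G⁻¹)G`. Since `Q`, `S` and `G` are invertible, this gives `Q⁻¹Φ = ΦG⁻¹S⁻¹` and
`ΦᵀQ⁻¹ = S⁻¹G⁻¹Φᵀ`, and multiplying the two the middle factor `ΦᵀΦ = G` cancels one `G⁻¹`.
-/

open Matrix

namespace Matrix

section CommRing

variable {m n α : Type*} [Fintype m] [Fintype n] [DecidableEq m] [DecidableEq n] [CommRing α]

theorem inv_mul_eq_mul_inv_of_mul_eq_mul {A : Matrix m m α} {B : Matrix n n α} {X : Matrix m n α}
    (hA : IsUnit A.det) (hB : IsUnit B.det) (h : A * X = X * B) : A⁻¹ * X = X * B⁻¹ := by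
  calc A⁻¹ * X = A⁻¹ * (X * B) * B⁻¹ := by
        rw [← Matrix.mul_assoc, mul_nonsing_inv_cancel_right _ _ hB]
    _ = X * B⁻¹ := by rw [← h, nonsing_inv_mul_cancel_left _ _ hA]

theorem mul_inv_eq_inv_mul_of_mul_eq_mul {A : Matrix m m α} {B : Matrix n n α} {X : Matrix n m α}
    (hA : IsUnit A.det) (hB : IsUnit B.det) (h : X * A = B * X) : X * A⁻¹ = B⁻¹ * X := by
  calc X * A⁻¹ = B⁻¹ * (B * X) * A⁻¹ := by rw [nonsing_inv_mul_cancel_left _ _ hB]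
    _ = B⁻¹ * X := by rw [← h, Matrix.mul_assoc, mul_nonsing_inv_cancel_right _ _ hA]

variable {Φ : Matrix m n α}

theorem mul_mul_transpose_add_smul_one_mul (hΦ : IsUnit (Φᵀ * Φ).det) (P : Matrix n n α) (σ : α) :
    (Φ * P * Φᵀ + σ • 1) * Φ = Φ * ((P + σ • (Φᵀ * Φ)⁻¹) * (Φᵀ * Φ)) := by
  simp only [Matrix.add_mul, Matrix.mul_add, Matrix.smul_mul, Matrix.mul_smul, Matrix.one_mul,
    Matrix.mul_one, nonsing_inv_mul _ hΦ, Matrix.mul_assoc]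

theorem transpose_mul_mul_mul_transpose_add_smul_one (hΦ : IsUnit (Φᵀ * Φ).det)
    (P : Matrix n n α) (σ : α) :
    Φᵀ * (Φ * P * Φᵀ + σ • 1) = ((Φᵀ * Φ) * (P + σ • (Φᵀ * Φ)⁻¹)) * Φᵀ := by
  simp only [Matrix.add_mul, Matrix.mul_add, Matrix.smul_mul, Matrix.mul_smul, Matrix.one_mul,
    Matrix.mul_one, mul_nonsing_inv _ hΦ, Matrix.mul_assoc]

end CommRing

theorem posDef_mul_mul_transpose_add_smul_one {m n : Type*} [Fintype m] [Fintype n]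
    [DecidableEq m] {P : Matrix n n ℝ} (hP : P.PosSemidef) (Φ : Matrix m n ℝ)
    {σ : ℝ} (hσ : 0 < σ) : (Φ * P * Φᵀ + σ • 1).PosDef := by
  refine PosDef.posSemidef_add ?_ (PosDef.one.smul hσ)
  simpa using hP.mul_mul_conjTranspose_same Φ

theorem posDef_add_smul_inv_transpose_mul_self {m n : Type*} [Fintype m] [Fintype n]
    [DecidableEq n] {P : Matrix n n ℝ} (hP : P.PosDef) (Φ : Matrix m n ℝ)
    {σ : ℝ} (hσ : 0 ≤ σ) : (P + σ • (Φᵀ * Φ)⁻¹).PosDef := by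
  refine hP.add_posSemidef (PosSemidef.smul (PosSemidef.inv ?_) hσ)
  simpa using posSemidef_conjTranspose_mul_self Φ

end Matrix

theorem phiT_Qinv_sq_phi {n N : ℕ}
    (Φ : Matrix (Fin N) (Fin n) ℝ) (hΦ : IsUnit (Φᵀ * Φ))
    (P : Matrix (Fin n) (Fin n) ℝ) (hP : P.PosDef)
    (σ2 : ℝ) (hσ : 0 < σ2)
    (Q : Matrix (Fin N) (Fin N) ℝ) (hQ : Q = Φ * P * Φᵀ + σ2 • 1)
    (S : Matrix (Fin n) (Fin n) ℝ) (hS : S = P + σ2 • (Φᵀ * Φ)⁻¹) :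
    Φᵀ * Q⁻¹ * Q⁻¹ * Φ = S⁻¹ * (Φᵀ * Φ)⁻¹ * S⁻¹ := by
  have hG : IsUnit (Φᵀ * Φ).det := (isUnit_iff_isUnit_det _).mp hΦ
  have hQ' : IsUnit Q.det := (isUnit_iff_isUnit_det _).mp <| hQ ▸
    (posDef_mul_mul_transpose_add_smul_one hP.posSemidef Φ hσ).isUnit
  have hS' : IsUnit S.det := (isUnit_iff_isUnit_det _).mp <| hS ▸
    (posDef_add_smul_inv_transpose_mul_self hP Φ hσ.le).isUnit
  have hSG : IsUnit (S * (Φᵀ * Φ)).det := by rw [det_mul]; exact hS'.mul hG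
  have hGS : IsUnit ((Φᵀ * Φ) * S).det := by rw [det_mul]; exact hG.mul hS'
  have right : Q⁻¹ * Φ = Φ * ((Φᵀ * Φ)⁻¹ * S⁻¹) := by
    rw [← Matrix.mul_inv_rev]
    exact inv_mul_eq_mul_inv_of_mul_eq_mul hQ' hSG
      (hQ ▸ hS ▸ mul_mul_transpose_add_smul_one_mul hG P σ2)
  have left : Φᵀ * Q⁻¹ = (S⁻¹ * (Φᵀ * Φ)⁻¹) * Φᵀ := by
    rw [← Matrix.mul_inv_rev]
    exact mul_inv_eq_inv_mul_of_mul_eq_mul hQ' hGS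
      (hQ ▸ hS ▸ transpose_mul_mul_mul_transpose_add_smul_one hG P σ2)
  calc Φᵀ * Q⁻¹ * Q⁻¹ * Φ = (Φᵀ * Q⁻¹) * (Q⁻¹ * Φ) := by rw [Matrix.mul_assoc]
    _ = S⁻¹ * (Φᵀ * Φ)⁻¹ * ((Φᵀ * Φ) * (Φᵀ * Φ)⁻¹) * S⁻¹ := by
      rw [left, right]; simp only [Matrix.mul_assoc]
    _ = S⁻¹ * (Φᵀ * Φ)⁻¹ * S⁻¹ := by rw [mul_nonsing_inv _ hG, Matrix.mul_one]
end

section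
/- Let P be symmetric positive definite, A positive definite, σ² > 0, Φ ∈ ℝ^{N×n} with ΦᵀΦ invertible, θ₀ ∈ ℝ^n nonzero. For 0 < β < 2σ²/(θ₀ᵀAθ₀), the matrix σ²[2A + βA(ΦᵀΦ)^{-1}A] − βAθ₀θ₀ᵀA is positive definite. -/
/-!
Split the matrix as `(2σ² A - β A θ₀θ₀ᵀ A) + σ²β A (ΦᵀΦ)⁻¹ A`. The second summand is positive
semidefinite. For the first, Cauchy–Schwarz for the inner product `⟪x, y⟫ = xᵀ A y` gives
`(θ₀ᵀ A x)² ≤ (θ₀ᵀ A θ₀)(xᵀ A x)`, so its quadratic form is at least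
`(2σ² - β θ₀ᵀ A θ₀) xᵀ A x > 0`.
-/

open Matrix

theorem Matrix.dotProduct_mul_vecMulVec_mul_mulVec {ι α : Type*} [Fintype ι] [CommSemiring α]
    (A B : Matrix ι ι α) (u w x y : ι → α) :
    x ⬝ᵥ (A * vecMulVec u w * B) *ᵥ y = (x ⬝ᵥ A *ᵥ u) * (w ⬝ᵥ B *ᵥ y) := by
  rw [mul_vecMulVec, vecMulVec_mul, vecMulVec_mulVec, op_smul_eq_smul, dotProduct_smul,
    smul_eq_mul, ← dotProduct_mulVec, mul_comm]

theorem Matrix.PosSemidef.dotProduct_mulVec_mul_le {ι : Type*} [Fintype ι]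
    {A : Matrix ι ι ℝ} (hA : A.PosSemidef) (x y : ι → ℝ) :
    (x ⬝ᵥ A *ᵥ y) * (y ⬝ᵥ A *ᵥ x) ≤ (x ⬝ᵥ A *ᵥ x) * (y ⬝ᵥ A *ᵥ y) := by
  classical
  simpa only [toBilin'_apply'] using
    (toBilin' A).apply_mul_apply_le_of_forall_zero_le
      (fun z => by simpa only [toBilin'_apply', star_trivial] using hA.dotProduct_mulVec_nonneg z)
      x y

theorem Matrix.PosDef.smul_sub_smul_mul_vecMulVec_self_mul {ι : Type*} [Fintype ι]
    {A : Matrix ι ι ℝ} (hA : A.PosDef) (v : ι → ℝ) {a b : ℝ} (ha : 0 < a)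
    (hab : b * (v ⬝ᵥ A *ᵥ v) < a) :
    (a • A - b • (A * vecMulVec v v * A)).PosDef := by
  have hS : (A * vecMulVec v v * A).PosSemidef := by
    simpa only [star_trivial, hA.isHermitian.eq] using
      (posSemidef_vecMulVec_self_star v).mul_mul_conjTranspose_same A
  refine .of_dotProduct_mulVec_pos
    ((hA.isHermitian.smul (.all a)).sub (hS.isHermitian.smul (.all b))) fun x hx => ?_
  have hxAx : 0 < x ⬝ᵥ A *ᵥ x := by simpa using hA.dotProduct_mulVec_pos hx
  have hSx := hS.dotProduct_mulVec_nonneg x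
  have hCS := hA.posSemidef.dotProduct_mulVec_mul_le x v
  simp only [star_trivial, dotProduct_mul_vecMulVec_mul_mulVec] at hSx ⊢
  rw [sub_mulVec, dotProduct_sub, smul_mulVec, smul_mulVec, dotProduct_smul, dotProduct_smul,
    smul_eq_mul, smul_eq_mul, dotProduct_mul_vecMulVec_mul_mulVec]
  rcases le_or_gt b 0 with hb | hb
  · nlinarith
  · nlinarith [mul_le_mul_of_nonneg_left hCS hb.le]

theorem key_posdef_inequality_general {n N : ℕ}
    (A : Matrix (Fin n) (Fin n) ℝ) (hA : A.PosDef)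
    (σ2 : ℝ) (hσ : 0 < σ2)
    (Φ : Matrix (Fin N) (Fin n) ℝ)
    (θ0 : Fin n → ℝ)
    (β : ℝ) (hβ : 0 < β) (hβ' : β < 2 * σ2 / (θ0 ⬝ᵥ A *ᵥ θ0)) :
    (σ2 • ((2 : ℝ) • A + β • (A * (Φᵀ * Φ)⁻¹ * A))
      - β • (A * vecMulVec θ0 θ0 * A)).PosDef := by
  have hθ0 : 0 < θ0 ⬝ᵥ A *ᵥ θ0 := (div_pos_iff_of_pos_left (by positivity)).mp (hβ.trans hβ')
  have hG : (A * (Φᵀ * Φ)⁻¹ * A).PosSemidef := by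
    have := (posSemidef_conjTranspose_mul_self Φ).inv.mul_mul_conjTranspose_same A
    rwa [hA.isHermitian.eq, conjTranspose_eq_transpose_of_trivial] at this
  have hsplit : σ2 • ((2 : ℝ) • A + β • (A * (Φᵀ * Φ)⁻¹ * A)) - β • (A * vecMulVec θ0 θ0 * A)
      = ((2 * σ2) • A - β • (A * vecMulVec θ0 θ0 * A)) + (σ2 * β) • (A * (Φᵀ * Φ)⁻¹ * A) := by
    module
  rw [hsplit]
  exact (hA.smul_sub_smul_mul_vecMulVec_self_mul θ0 (by positivity)
    ((lt_div_iff₀ hθ0).mp hβ')).add_posSemidef (hG.smul (by positivity))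

theorem key_posdef_inequality {n N : ℕ}
    (P : Matrix (Fin n) (Fin n) ℝ) (hP : P.PosDef)
    (A : Matrix (Fin n) (Fin n) ℝ) (hA : A.PosDef)
    (σ2 : ℝ) (hσ : 0 < σ2)
    (Φ : Matrix (Fin N) (Fin n) ℝ) (hΦ : IsUnit (Φᵀ * Φ))
    (θ0 : Fin n → ℝ) (hθ0 : θ0 ≠ 0)
    (β : ℝ) (hβ : 0 < β) (hβ' : β < 2 * σ2 / (θ0 ⬝ᵥ A *ᵥ θ0)) :
    (σ2 • ((2 : ℝ) • A + β • (A * (Φᵀ * Φ)⁻¹ * A))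
      - β • (A * vecMulVec θ0 θ0 * A)).PosDef :=
  key_posdef_inequality_general A hA σ2 hσ Φ θ0 β hβ hβ'
end

section
/- Let M(β) := σ²(ΦᵀΦ + βA)^{-1}ΦᵀΦ(ΦᵀΦ + βA)^{-1} + β²(ΦᵀΦ + βA)^{-1}Aθ₀θ₀ᵀA(ΦᵀΦ + βA)^{-1} be the MSE matrix of the regularized LS estimator with regularization βA. If A is symmetric positive definite, θ₀ ≠ 0, and 0 < β < 2σ²/(θ₀ᵀAθ₀), then M(0) − M(β) is positive definite, where M(0) = σ²(ΦᵀΦ)^{-1}. -/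
open Matrix

/-!
Write `B = ΦᵀΦ` and `S = B + βA`. Conjugating by the symmetric invertible `S`,
`S (σ²B⁻¹ - M) S = β (2σ²A - β (Aθ₀)(Aθ₀)ᵀ) + β²σ² A B⁻¹ A`.
The last term is positive semidefinite, and the first is positive definite because
Cauchy–Schwarz for the inner product `yᵀAz` gives `(θ₀ᵀAy)² ≤ (θ₀ᵀAθ₀)(yᵀAy)`, so its quadratic
form is at least `β (2σ² - β θ₀ᵀAθ₀) yᵀAy > 0`.
-/

namespace Matrix

variable {ι α : Type*}

lemma PosDef.isSymm {A : Matrix ι ι ℝ} (hA : A.PosDef) : A.IsSymm :=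
  isHermitian_iff_isSymm.mp hA.isHermitian

variable [Fintype ι]

lemma PosSemidef.dotProduct_mulVec_sq_le {A : Matrix ι ι ℝ} (hA : A.PosSemidef)
    (u v : ι → ℝ) : (u ⬝ᵥ A *ᵥ v) ^ 2 ≤ (u ⬝ᵥ A *ᵥ u) * (v ⬝ᵥ A *ᵥ v) := by
  let := A.toSeminormedAddCommGroup hA
  let := A.toInnerProductSpace hA
  have hinner : ∀ x y : ι → ℝ, inner ℝ x y = x ⬝ᵥ A *ᵥ y := fun x y => by
    change (A *ᵥ y) ⬝ᵥ star x = _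
    simp [dotProduct_comm]
  simpa only [sq, hinner] using real_inner_mul_inner_self_le u v

lemma IsSymm.vecMul_eq_mulVec [CommSemiring α] {A : Matrix ι ι α} (hA : A.IsSymm)
    (x : ι → α) : x ᵥ* A = A *ᵥ x := by
  rw [← mulVec_transpose, hA.eq]

lemma IsSymm.mul_vecMulVec_mul [CommSemiring α] {A : Matrix ι ι α} (hA : A.IsSymm)
    (x : ι → α) : A * vecMulVec x x * A = vecMulVec (A *ᵥ x) (A *ᵥ x) := by
  rw [mul_vecMulVec, vecMulVec_mul, hA.vecMul_eq_mulVec]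

lemma PosDef.smul_sub_smul_vecMulVec {A : Matrix ι ι ℝ} (hA : A.PosDef) (θ : ι → ℝ)
    {t c : ℝ} (hc : 0 ≤ c) (h : c * (θ ⬝ᵥ A *ᵥ θ) < t) :
    (t • A - c • vecMulVec (A *ᵥ θ) (A *ᵥ θ)).PosDef := by
  have hrank : (vecMulVec (A *ᵥ θ) (A *ᵥ θ)).PosSemidef := by
    simpa using posSemidef_vecMulVec_self_star (A *ᵥ θ)
  refine .of_dotProduct_mulVec_pos
    ((hA.isHermitian.smul (.all t)).sub (hrank.isHermitian.smul (.all c))) fun y hy => ?_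
  have hAy : 0 < y ⬝ᵥ A *ᵥ y := by simpa using hA.dotProduct_mulVec_pos hy
  have hcauchySchwarz := hA.posSemidef.dotProduct_mulVec_sq_le θ y
  have hquad : y ⬝ᵥ (t • A - c • vecMulVec (A *ᵥ θ) (A *ᵥ θ)) *ᵥ y
      = t * (y ⬝ᵥ A *ᵥ y) - c * (θ ⬝ᵥ A *ᵥ y) ^ 2 := by
    rw [dotProduct_mulVec θ, hA.isSymm.vecMul_eq_mulVec]
    simp only [sub_mulVec, smul_mulVec, vecMulVec_mulVec, dotProduct_sub, dotProduct_smul,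
      op_smul_eq_mul, smul_eq_mul, dotProduct_comm y (A *ᵥ θ)]
    ring
  rw [star_trivial, hquad]
  nlinarith [mul_le_mul_of_nonneg_left hcauchySchwarz hc]

variable [DecidableEq ι]

lemma add_mul_inv_mul_add [CommRing α] {B : Matrix ι ι α} (hB : IsUnit B.det)
    (C : Matrix ι ι α) : (B + C) * B⁻¹ * (B + C) = B + 2 • C + C * B⁻¹ * C := by
  simp only [Matrix.add_mul, Matrix.mul_add, mul_nonsing_inv _ hB, nonsing_inv_mul _ hB,
    Matrix.one_mul, Matrix.mul_one, Matrix.mul_assoc]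
  abel

end Matrix

theorem mse_matrix_decrease_general {n N : ℕ}
    (Φ : Matrix (Fin N) (Fin n) ℝ) (hΦ : (Φᵀ * Φ).PosDef)
    (A : Matrix (Fin n) (Fin n) ℝ) (hA : A.PosDef)
    (σ2 : ℝ)
    (θ0 : Fin n → ℝ) (hθ0 : θ0 ≠ 0)
    (β : ℝ) (hβ : 0 < β) (hβ' : β < 2 * σ2 / (θ0 ⬝ᵥ A *ᵥ θ0))
    (M : Matrix (Fin n) (Fin n) ℝ)
    (hM : M = σ2 • ((Φᵀ * Φ + β • A)⁻¹ * (Φᵀ * Φ) * (Φᵀ * Φ + β • A)⁻¹)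
      + (β ^ 2) • ((Φᵀ * Φ + β • A)⁻¹ * A * vecMulVec θ0 θ0 * A
          * (Φᵀ * Φ + β • A)⁻¹)) :
    (σ2 • (Φᵀ * Φ)⁻¹ - M).PosDef := by
  set B := Φᵀ * Φ
  set S := B + β • A
  have hS : S.PosDef := hΦ.add (hA.smul hβ)
  have hBdet : IsUnit B.det := isUnit_iff_ne_zero.mpr hΦ.det_pos.ne'
  have hSdet : IsUnit S.det := isUnit_iff_ne_zero.mpr hS.det_pos.ne'
  have hθA : 0 < θ0 ⬝ᵥ A *ᵥ θ0 := by simpa using hA.dotProduct_mulVec_pos hθ0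
  have hβθ : β * (θ0 ⬝ᵥ A *ᵥ θ0) < 2 * σ2 := (lt_div_iff₀ hθA).mp hβ'
  have hσ2 : 0 ≤ β ^ 2 * σ2 := by nlinarith [mul_pos hβ hθA]
  have hSMS : S * M * S = σ2 • B + β ^ 2 • vecMulVec (A *ᵥ θ0) (A *ᵥ θ0) := by
    rw [hM, ← hA.isSymm.mul_vecMulVec_mul]
    simp only [Matrix.mul_add, Matrix.add_mul, Matrix.mul_smul, Matrix.smul_mul,
      Matrix.mul_assoc, nonsing_inv_mul _ hSdet, Matrix.mul_one,
      mul_nonsing_inv_cancel_left _ _ hSdet]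
  have hconj : S * (σ2 • B⁻¹ - M) * S =
      β • ((2 * σ2) • A - β • vecMulVec (A *ᵥ θ0) (A *ᵥ θ0)) + (β ^ 2 * σ2) • (A * B⁻¹ * A) := by
    rw [Matrix.mul_sub, Matrix.sub_mul, hSMS, Matrix.mul_smul, Matrix.smul_mul,
      add_mul_inv_mul_add hBdet]
    simp only [Matrix.smul_mul, Matrix.mul_smul]
    module
  rw [← IsUnit.posDef_star_left_conjugate_iff ((isUnit_iff_isUnit_det S).mpr hSdet),
    star_eq_conjTranspose, hS.isHermitian.eq, hconj]
  refine ((hA.smul_sub_smul_vecMulVec θ0 hβ.le hβθ).smul hβ).add_posSemidef ?_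
  have hABA := (hΦ.inv.posSemidef.conjTranspose_mul_mul_same A).smul hσ2
  rwa [hA.isHermitian.eq] at hABA

theorem mse_matrix_decrease {n N : ℕ}
    (Φ : Matrix (Fin N) (Fin n) ℝ) (hΦ : (Φᵀ * Φ).PosDef)
    (A : Matrix (Fin n) (Fin n) ℝ) (hA : A.PosDef)
    (σ2 : ℝ) (hσ : 0 < σ2)
    (θ0 : Fin n → ℝ) (hθ0 : θ0 ≠ 0)
    (β : ℝ) (hβ : 0 < β) (hβ' : β < 2 * σ2 / (θ0 ⬝ᵥ A *ᵥ θ0))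
    (M : Matrix (Fin n) (Fin n) ℝ)
    (hM : M = σ2 • ((Φᵀ * Φ + β • A)⁻¹ * (Φᵀ * Φ) * (Φᵀ * Φ + β • A)⁻¹)
      + (β ^ 2) • ((Φᵀ * Φ + β • A)⁻¹ * A * vecMulVec θ0 θ0 * A
          * (Φᵀ * Φ + β • A)⁻¹)) :
    (σ2 • (Φᵀ * Φ)⁻¹ - M).PosDef :=
  mse_matrix_decrease_general Φ hΦ A hA σ2 θ0 hθ0 β hβ hβ' M hM
end

section
/- Let n ≥ 1, N > 0, σ² > 0, and suppose ΦᵀΦ = N·I_n with Φ ∈ ℝ^{N×n}. Then for P = (θ₀ᵀθ₀/n)I_n with θ₀ ≠ 0, the regularized LS estimator satisfies MSEg(P) = nσ²/(N + nσ²/(θ₀ᵀθ₀)) < nσ²/N, where nσ²/N is the MSEg of the least squares estimator. -/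
/-!
With an orthonormal design `Φᵀ Φ = N • 1` and an isotropic prior `P = c • 1`, the kernel matrix
`Q = c • Φ Φᵀ + σ² • 1` acts on the columns of `Φ` as the scalar `d = c N + σ²`, so `Q⁻¹ Φ = d⁻¹ Φ`.
Hence the gain `P Φᵀ Q⁻¹ Φ` and the covariance term `P Φᵀ Q⁻² Φ P` are the scalar matrices
`(c N / d) • 1` and `(c² N / d²) • 1`, and the mean squared error reduces to an identity between
real numbers once `c = θ₀ᵀθ₀ / n`.
-/

open Matrix

namespace Matrix

variable {m n K : Type*} [Fintype m] [DecidableEq m] [Fintype n]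

theorem posDef_smul_mul_transpose_add_smul_one (Φ : Matrix m n ℝ) {c s : ℝ} (hc : 0 ≤ c)
    (hs : 0 < s) : (c • (Φ * Φᵀ) + s • 1).PosDef := by
  have hΦ : (Φ * Φᵀ).PosSemidef := by simpa using posSemidef_self_mul_conjTranspose Φ
  exact PosDef.posSemidef_add (hΦ.smul hc) (PosDef.one.smul hs)

variable [DecidableEq n] [Field K]

theorem inv_mul_eq_inv_smul_of_mul_eq_smul {k : Type*} {Q : Matrix m m K} {A : Matrix m k K}
    {d : K} (hQ : IsUnit Q) (hd : d ≠ 0) (h : Q * A = d • A) : Q⁻¹ * A = d⁻¹ • A := by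
  have hA := nonsing_inv_mul_cancel_left Q A ((isUnit_iff_isUnit_det Q).mp hQ)
  rw [h, Matrix.mul_smul] at hA
  exact (eq_inv_smul_iff₀ hd).mpr hA

theorem smul_mul_transpose_add_smul_one_mul {Φ : Matrix m n K} {r : K} (hΦ : Φᵀ * Φ = r • 1)
    (c s : K) : (c • (Φ * Φᵀ) + s • 1) * Φ = (c * r + s) • Φ := by
  rw [Matrix.add_mul, Matrix.smul_mul, Matrix.mul_assoc, hΦ, Matrix.mul_smul, Matrix.mul_one,
    Matrix.smul_mul, Matrix.one_mul, smul_smul, add_smul]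

section ScalarKernel

variable {Φ : Matrix m n K} {Q : Matrix m m K} {r d : K}

theorem smul_one_mul_transpose_mul_inv_mul (hΦ : Φᵀ * Φ = r • 1) (hQΦ : Q⁻¹ * Φ = d⁻¹ • Φ)
    (c : K) : (c • 1 : Matrix n n K) * Φᵀ * Q⁻¹ * Φ = (c * r / d) • 1 := by
  rw [Matrix.mul_assoc, hQΦ, Matrix.smul_mul, Matrix.one_mul, Matrix.smul_mul, Matrix.mul_smul,
    hΦ, smul_smul, smul_smul]
  congr 1
  ring

theorem smul_one_mul_transpose_mul_inv_mul_inv_mul_smul_one (hΦ : Φᵀ * Φ = r • 1)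
    (hQΦ : Q⁻¹ * Φ = d⁻¹ • Φ) (c : K) :
    (c • 1 : Matrix n n K) * Φᵀ * Q⁻¹ * Q⁻¹ * Φ * (c • 1) = (c ^ 2 * r / d ^ 2) • 1 := by
  rw [Matrix.mul_smul, Matrix.mul_one]
  simp only [Matrix.mul_assoc]
  rw [hQΦ, Matrix.mul_smul, hQΦ]
  simp only [Matrix.mul_smul, Matrix.smul_mul, hΦ, Matrix.one_mul, smul_smul]
  congr 1
  ring

end ScalarKernel

theorem sum_sq_smul_one_mulVec_sub (a : K) (θ : n → K) :
    ∑ i, (((a • 1 : Matrix n n K) *ᵥ θ - θ) i) ^ 2 = (a - 1) ^ 2 * (θ ⬝ᵥ θ) := by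
  rw [dotProduct, Finset.mul_sum]
  refine Finset.sum_congr rfl fun i _ => ?_
  simp only [smul_mulVec, one_mulVec, Pi.sub_apply, Pi.smul_apply, smul_eq_mul]
  ring

end Matrix

theorem ridge_mseg_scalar_eq {S n N σ2 : ℝ} (hS : 0 < S) (hn : 0 < n) (hN : 0 ≤ N)
    (hσ : 0 < σ2) :
    (S / n * N / (S / n * N + σ2) - 1) ^ 2 * S
        + σ2 * ((S / n) ^ 2 * N / (S / n * N + σ2) ^ 2 * n)
      = n * σ2 / (N + n * σ2 / S) := by
  have hd : 0 < S / n * N + σ2 := by positivity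
  have hd' : 0 < N + n * σ2 / S := by positivity
  field_simp
  ring

theorem ridge_mseg_value_orthonormal {n N : ℕ} (hn : 1 ≤ n) (hN : 0 < N)
    (σ2 : ℝ) (hσ : 0 < σ2)
    (Φ : Matrix (Fin N) (Fin n) ℝ) (hΦ : Φᵀ * Φ = (N : ℝ) • 1)
    (θ0 : Fin n → ℝ) (hθ0 : θ0 ≠ 0)
    (P : Matrix (Fin n) (Fin n) ℝ) (hP : P = ((θ0 ⬝ᵥ θ0) / n) • 1)
    (Q : Matrix (Fin N) (Fin N) ℝ) (hQ : Q = Φ * P * Φᵀ + σ2 • 1) :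
    (∑ i, ((P * Φᵀ * Q⁻¹ * Φ) *ᵥ θ0 - θ0) i ^ 2)
        + σ2 * (P * Φᵀ * Q⁻¹ * Q⁻¹ * Φ * P).trace
      = n * σ2 / ((N : ℝ) + n * σ2 / (θ0 ⬝ᵥ θ0)) ∧
    n * σ2 / ((N : ℝ) + n * σ2 / (θ0 ⬝ᵥ θ0)) < n * σ2 / N := by
  have hnpos : (0 : ℝ) < n := by exact_mod_cast hn
  have hNpos : (0 : ℝ) < N := by exact_mod_cast hN
  have hS : 0 < θ0 ⬝ᵥ θ0 := by simpa using dotProduct_star_self_pos_iff.mpr hθ0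
  set c := θ0 ⬝ᵥ θ0 / n
  have hQ' : Q = c • (Φ * Φᵀ) + σ2 • 1 := by
    rw [hQ, hP, Matrix.mul_smul, Matrix.mul_one, Matrix.smul_mul]
  have hQΦ : Q⁻¹ * Φ = (c * N + σ2)⁻¹ • Φ := by
    rw [hQ']
    exact inv_mul_eq_inv_smul_of_mul_eq_smul
      (posDef_smul_mul_transpose_add_smul_one Φ (by positivity) hσ).isUnit (by positivity)
      (smul_mul_transpose_add_smul_one_mul hΦ c σ2)
  rw [hP, smul_one_mul_transpose_mul_inv_mul hΦ hQΦ,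
    smul_one_mul_transpose_mul_inv_mul_inv_mul_smul_one hΦ hQΦ, sum_sq_smul_one_mulVec_sub,
    trace_smul, trace_one, Fintype.card_fin, smul_eq_mul]
  refine ⟨ridge_mseg_scalar_eq hS hnpos hNpos.le hσ, ?_⟩
  exact div_lt_div_of_pos_left (by positivity) hNpos (lt_add_of_pos_right _ (by positivity))
end

section
/- Let Φ ∈ ℝ^{N×n} with ΦᵀΦ = N·I_n, σ² > 0, and for η > 0 set P(η) = ηI_n, Q(η) = ηΦΦᵀ + σ²I_N. Then the empirical Bayes criterion F(η) = YᵀQ(η)^{-1}Y + log det Q(η), as a function of η ≥ 0, is minimized at η̂ = max(0, (θ̂ᴸˢ)ᵀθ̂ᴸˢ/n − σ²/N), where θ̂ᴸˢ = (ΦᵀΦ)^{-1}ΦᵀY. -/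
open Matrix

/-!
With `M = Φ Φᵀ` we have `M * M = N • M`, so `Q(η) = η • M + σ² • 1` is inverted inside the span
of `1` and `M`, and the Weinstein–Aronszajn identity gives `det Q(η) = σ²ᴺ (s / σ²)ⁿ` with
`s = σ² + η N`. Hence, up to a constant, `F(η) = a / s + n log s` with `a = ‖Φᵀ Y‖² / N`. This
function of `s` has derivative of the sign of `n s - a`, so on `s ≥ σ²` it is minimal at
`s = max σ² (a / n)`, which is `σ² + η̂ N` because `θ̂ᴸˢ = Φᵀ Y / N`.
-/

namespace Matrix

variable {m k R : Type*} [Fintype m] [Fintype k]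

theorem dotProduct_mul_transpose_mulVec [CommSemiring R] (Φ : Matrix m k R) (Y : m → R) :
    Y ⬝ᵥ (Φ * Φᵀ) *ᵥ Y = (Φᵀ *ᵥ Y) ⬝ᵥ (Φᵀ *ᵥ Y) := by
  rw [← mulVec_mulVec, dotProduct_mulVec, ← mulVec_transpose]

variable [DecidableEq k]

theorem mul_transpose_mul_self_eq_smul [CommSemiring R] {Φ : Matrix m k R} {c : R}
    (hΦ : Φᵀ * Φ = c • 1) : (Φ * Φᵀ) * (Φ * Φᵀ) = c • (Φ * Φᵀ) := by
  rw [Matrix.mul_assoc, ← Matrix.mul_assoc Φᵀ, hΦ, Matrix.smul_mul, Matrix.one_mul,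
    Matrix.mul_smul]

variable [Field R] {Φ : Matrix m k R} {c : R}

theorem inv_transpose_mul_self_mul_transpose_mulVec (hΦ : Φᵀ * Φ = c • 1)
    (Y : m → R) : ((Φᵀ * Φ)⁻¹ * Φᵀ) *ᵥ Y = c⁻¹ • (Φᵀ *ᵥ Y) := by
  have hinv : (Φᵀ * Φ)⁻¹ = c⁻¹ • (1 : Matrix k k R) := by
    rcases eq_or_ne c 0 with rfl | hc
    · simp [hΦ]
    · rw [hΦ]
      exact inv_eq_left_inv (by rw [smul_mul_smul_comm, inv_mul_cancel₀ hc, Matrix.one_mul,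
        one_smul])
  rw [hinv, Matrix.smul_mul, Matrix.one_mul, smul_mulVec]

variable [DecidableEq m]

theorem inv_smul_mul_transpose_add_smul_one (hΦ : Φᵀ * Φ = c • 1) {η σ : R}
    (hσ : σ ≠ 0) (hs : σ + η * c ≠ 0) :
    (η • (Φ * Φᵀ) + σ • 1)⁻¹ = σ⁻¹ • 1 - (η / (σ * (σ + η * c))) • (Φ * Φᵀ) := by
  refine inv_eq_right_inv ?_
  have hcoef : η * σ⁻¹ - (η * c + σ) * (η / (σ * (σ + η * c))) = 0 := by
    field_simp
    ring
  calc (η • (Φ * Φᵀ) + σ • 1) * (σ⁻¹ • 1 - (η / (σ * (σ + η * c))) • (Φ * Φᵀ))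
      = (η * σ⁻¹ - (η * c + σ) * (η / (σ * (σ + η * c)))) • (Φ * Φᵀ) + (σ * σ⁻¹) • 1 := by
        simp only [add_mul, mul_sub, smul_mul_smul_comm, Matrix.mul_one, Matrix.one_mul,
          mul_transpose_mul_self_eq_smul hΦ, smul_smul]
        module
    _ = 1 := by rw [hcoef, zero_smul, zero_add, mul_inv_cancel₀ hσ, one_smul]

theorem det_smul_mul_transpose_add_smul_one (hΦ : Φᵀ * Φ = c • 1) {η σ : R}
    (hσ : σ ≠ 0) :
    (η • (Φ * Φᵀ) + σ • 1).det = σ ^ Fintype.card m * ((σ + η * c) / σ) ^ Fintype.card k := by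
  have hfactor : η • (Φ * Φᵀ) + σ • (1 : Matrix m m R) = σ • (1 + ((η / σ) • Φ) * Φᵀ) := by
    rw [smul_add, Matrix.smul_mul, smul_smul, mul_div_cancel₀ η hσ, add_comm]
  have hsmall : (1 : Matrix k k R) + Φᵀ * ((η / σ) • Φ) = ((σ + η * c) / σ) • 1 := by
    rw [Matrix.mul_smul, hΦ, smul_smul, show (σ + η * c) / σ = 1 + η / σ * c by field_simp,
      add_smul, one_smul]
  rw [hfactor, det_smul, det_one_add_mul_comm, hsmall, det_smul, det_one, mul_one]

end Matrix

section EmpiricalBayes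

open Real

noncomputable def ebProfile (a c s : ℝ) : ℝ := a / s + c * log s

theorem ebProfile_le_of_mul_nonpos {a c s t : ℝ} (hc : 0 ≤ c) (hs : 0 < s) (ht : 0 < t)
    (h : (t - s) * (a - c * s) ≤ 0) : ebProfile a c s ≤ ebProfile a c t := by
  have hlog : log s - log t ≤ s / t - 1 := by
    rw [← log_div hs.ne' ht.ne']
    exact log_le_sub_one_of_pos (div_pos hs ht)
  have hsplit : a / s - a / t + c * (s / t - 1) = (t - s) * (a - c * s) / (s * t) := by
    field_simp
    ring
  have hneg : a / s - a / t + c * (s / t - 1) ≤ 0 := by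
    rw [hsplit]
    exact div_nonpos_of_nonpos_of_nonneg h (by positivity)
  unfold ebProfile
  linarith [mul_le_mul_of_nonneg_left hlog hc]

theorem ebProfile_max_le {a c σ t : ℝ} (hc : 0 < c) (hσ : 0 < σ) (ht : σ ≤ t) :
    ebProfile a c (max σ (a / c)) ≤ ebProfile a c t := by
  refine ebProfile_le_of_mul_nonpos hc.le (hσ.trans_le (le_max_left _ _)) (hσ.trans_le ht) ?_
  rcases le_total (a / c) σ with h | h
  · rw [max_eq_left h]
    have : a ≤ c * σ := by rwa [div_le_iff₀' hc] at h
    exact mul_nonpos_of_nonneg_of_nonpos (by linarith) (by linarith)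
  · rw [max_eq_right h, mul_div_cancel₀ a hc.ne', sub_self, mul_zero]

variable {m k : Type*} [Fintype m] [Fintype k] [DecidableEq m] [DecidableEq k]

theorem dotProduct_inv_mulVec_add_log_det_eq_ebProfile {Φ : Matrix m k ℝ} {c : ℝ}
    (hΦ : Φᵀ * Φ = c • 1) (hc : c ≠ 0) {η σ : ℝ} (hσ : 0 < σ) (hs : 0 < σ + η * c)
    (Y : m → ℝ) :
    Y ⬝ᵥ (η • (Φ * Φᵀ) + σ • 1)⁻¹ *ᵥ Y + log (η • (Φ * Φᵀ) + σ • 1).det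
      = ((Y ⬝ᵥ Y - (Φᵀ *ᵥ Y) ⬝ᵥ (Φᵀ *ᵥ Y) / c) / σ
          + (Fintype.card m - Fintype.card k) * log σ)
        + ebProfile ((Φᵀ *ᵥ Y) ⬝ᵥ (Φᵀ *ᵥ Y) / c) (Fintype.card k) (σ + η * c) := by
  rw [inv_smul_mul_transpose_add_smul_one hΦ hσ.ne' hs.ne',
    det_smul_mul_transpose_add_smul_one hΦ hσ.ne', log_mul (by positivity) (by positivity),
    log_pow, log_pow, log_div hs.ne' hσ.ne', sub_mulVec, smul_mulVec, smul_mulVec, one_mulVec,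
    dotProduct_sub, dotProduct_smul, dotProduct_smul, dotProduct_mul_transpose_mulVec, ebProfile]
  simp only [smul_eq_mul]
  field_simp
  ring

end EmpiricalBayes

theorem ridge_EB_minimizer_orthonormal {n N : ℕ} (hn : 1 ≤ n) (hN : 0 < N)
    (σ2 : ℝ) (hσ : 0 < σ2)
    (Φ : Matrix (Fin N) (Fin n) ℝ) (hΦ : Φᵀ * Φ = (N : ℝ) • 1)
    (Y : Fin N → ℝ)
    (θLS : Fin n → ℝ) (hθLS : θLS = ((Φᵀ * Φ)⁻¹ * Φᵀ) *ᵥ Y)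
    (F : ℝ → ℝ)
    (hF : ∀ η, F η = Y ⬝ᵥ (η • (Φ * Φᵀ) + σ2 • 1)⁻¹ *ᵥ Y
        + Real.log (η • (Φ * Φᵀ) + σ2 • (1 : Matrix (Fin N) (Fin N) ℝ)).det)
    (ηhat : ℝ) (hηhat : ηhat = max 0 ((θLS ⬝ᵥ θLS) / n - σ2 / N)) :
    ∀ η : ℝ, 0 ≤ η → F ηhat ≤ F η := by
  have hN0 : (0 : ℝ) < N := by exact_mod_cast hN
  have hn0 : (0 : ℝ) < n := by exact_mod_cast hn
  set a := (Φᵀ *ᵥ Y) ⬝ᵥ (Φᵀ *ᵥ Y) / N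
  have hF_profile : ∀ η, 0 ≤ η → F η = ((Y ⬝ᵥ Y - a) / σ2 + (N - n) * Real.log σ2)
      + ebProfile a n (σ2 + η * N) := fun η hη => by
    rw [hF, dotProduct_inv_mulVec_add_log_det_eq_ebProfile hΦ hN0.ne' hσ (by positivity) Y,
      Fintype.card_fin, Fintype.card_fin]
  have hθ : θLS ⬝ᵥ θLS = a / N := by
    rw [hθLS, inv_transpose_mul_self_mul_transpose_mulVec hΦ, dotProduct_smul, smul_dotProduct]
    simp only [smul_eq_mul, a]
    field_simp
  have hopt : σ2 + ηhat * N = max σ2 (a / n) := by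
    rw [hηhat, hθ, max_mul_of_nonneg _ _ hN0.le, zero_mul,
      show (a / N / n - σ2 / N) * N = a / n - σ2 by field_simp, ← max_add_add_left]
    simp
  intro η hη
  rw [hF_profile η hη, hF_profile ηhat (hηhat ▸ le_max_left _ _), hopt]
  exact add_le_add le_rfl (ebProfile_max_le hn0 hσ (le_add_of_nonneg_right (by positivity)))
end

section
/- Let P be symmetric positive definite, Φ ∈ ℝ^{N×n} with ΦᵀΦ invertible, σ² > 0, Q = ΦPΦᵀ + σ²I_N, S = P + σ²(ΦᵀΦ)^{-1}, θ̂ᴸˢ = (ΦᵀΦ)^{-1}ΦᵀY. Then YᵀQ^{-1}Y + YᵀΦ(ΦᵀΦ)^{-1}ΦᵀY/σ² − YᵀY/σ² = (θ̂ᴸˢ)ᵀS^{-1}θ̂ᴸˢ. -/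
open Matrix

/-!
With `A = ΦᵀΦ`, the hat matrix `H = Φ A⁻¹ Φᵀ` satisfies `Φᵀ H = Φᵀ`. Hence
`Q (1 - H) = σ² (1 - H)` and `Q Φ A⁻¹ S⁻¹ A⁻¹ Φᵀ = Φ (P + σ² A⁻¹) S⁻¹ A⁻¹ Φᵀ = H`, so
`Q⁻¹ = σ⁻² (1 - H) + Φ A⁻¹ S⁻¹ A⁻¹ Φᵀ`. The last term is the quadratic form of `S⁻¹`
pulled back along `Y ↦ θ̂ᴸˢ = A⁻¹ Φᵀ Y`, and the `H` and `1` terms cancel against the two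
other summands on the left.
-/

namespace Matrix

lemma dotProduct_mulVec_transpose_mul_mul {m k R : Type*} [Fintype m] [Fintype k] [CommSemiring R]
    (B : Matrix m k R) (C : Matrix m m R) (x : k → R) :
    (B *ᵥ x) ⬝ᵥ C *ᵥ (B *ᵥ x) = x ⬝ᵥ (Bᵀ * C * B) *ᵥ x := by
  rw [← mulVec_mulVec, ← mulVec_mulVec, dotProduct_mulVec x Bᵀ, vecMul_transpose]

lemma transpose_mul_mul_inv_transpose_mul_mul_transpose {m k R : Type*} [Fintype m] [Fintype k]
    [DecidableEq k] [CommRing R] (Φ : Matrix m k R) (hΦ : IsUnit (Φᵀ * Φ)) :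
    Φᵀ * (Φ * (Φᵀ * Φ)⁻¹ * Φᵀ) = Φᵀ := by
  rw [← Matrix.mul_assoc, ← Matrix.mul_assoc, mul_nonsing_inv _ ((isUnit_iff_isUnit_det _).mp hΦ),
    Matrix.one_mul]

lemma inv_mul_mul_transpose_add_smul_one {m k K : Type*} [Fintype m] [Fintype k] [DecidableEq m]
    [DecidableEq k] [Field K] (Φ : Matrix m k K) (P : Matrix k k K) {σ : K}
    (hΦ : IsUnit (Φᵀ * Φ)) (hσ : σ ≠ 0) (hS : IsUnit (P + σ • (Φᵀ * Φ)⁻¹)) :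
    (Φ * P * Φᵀ + σ • 1)⁻¹ = σ⁻¹ • (1 - Φ * (Φᵀ * Φ)⁻¹ * Φᵀ)
      + Φ * (Φᵀ * Φ)⁻¹ * (P + σ • (Φᵀ * Φ)⁻¹)⁻¹ * (Φᵀ * Φ)⁻¹ * Φᵀ := by
  set A := Φᵀ * Φ
  set S := P + σ • A⁻¹
  have hA : A * A⁻¹ = 1 := mul_nonsing_inv _ ((isUnit_iff_isUnit_det _).mp hΦ)
  have hHat : Φᵀ * (Φ * A⁻¹ * Φᵀ) = Φᵀ := transpose_mul_mul_inv_transpose_mul_mul_transpose Φ hΦ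
  have hResidual : (Φ * P * Φᵀ + σ • 1) * (1 - Φ * A⁻¹ * Φᵀ) = σ • (1 - Φ * A⁻¹ * Φᵀ) := by
    rw [Matrix.add_mul, Matrix.mul_sub, Matrix.mul_one, Matrix.mul_assoc (Φ * P), hHat, sub_self,
      zero_add, Matrix.smul_mul, Matrix.one_mul]
  have hFit : (Φ * P * Φᵀ + σ • 1) * (Φ * A⁻¹ * S⁻¹ * A⁻¹ * Φᵀ) = Φ * A⁻¹ * Φᵀ :=
    calc _ = Φ * ((P * (A * A⁻¹) + σ • A⁻¹) * S⁻¹) * A⁻¹ * Φᵀ := by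
          simp only [A, Matrix.add_mul, Matrix.mul_add, Matrix.smul_mul, Matrix.mul_smul,
            Matrix.one_mul, Matrix.mul_assoc]
      _ = _ := by
          rw [hA, Matrix.mul_one, mul_nonsing_inv _ ((isUnit_iff_isUnit_det _).mp hS),
            Matrix.mul_one]
  refine inv_eq_right_inv ?_
  rw [Matrix.mul_add, Matrix.mul_smul, hResidual, hFit, smul_smul, inv_mul_cancel₀ hσ, one_smul,
    sub_add_cancel]

end Matrix

theorem EB_quadratic_identity {n N : ℕ}
    (P : Matrix (Fin n) (Fin n) ℝ) (hP : P.PosDef)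
    (Φ : Matrix (Fin N) (Fin n) ℝ) (hΦ : IsUnit (Φᵀ * Φ))
    (σ2 : ℝ) (hσ : 0 < σ2)
    (Q : Matrix (Fin N) (Fin N) ℝ) (hQ : Q = Φ * P * Φᵀ + σ2 • 1)
    (S : Matrix (Fin n) (Fin n) ℝ) (hS : S = P + σ2 • (Φᵀ * Φ)⁻¹)
    (Y : Fin N → ℝ)
    (θLS : Fin n → ℝ) (hθLS : θLS = ((Φᵀ * Φ)⁻¹ * Φᵀ) *ᵥ Y) :
    Y ⬝ᵥ Q⁻¹ *ᵥ Y + (Y ⬝ᵥ (Φ * (Φᵀ * Φ)⁻¹ * Φᵀ) *ᵥ Y) / σ2 - (Y ⬝ᵥ Y) / σ2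
      = θLS ⬝ᵥ S⁻¹ *ᵥ θLS := by
  subst hQ hS hθLS
  have hGram : (Φᵀ * Φ).PosSemidef := by simpa using posSemidef_conjTranspose_mul_self Φ
  have hS : (P + σ2 • (Φᵀ * Φ)⁻¹).PosDef := hP.add_posSemidef (hGram.inv.smul hσ.le)
  have hGramInvSymm : ((Φᵀ * Φ)⁻¹)ᵀ = (Φᵀ * Φ)⁻¹ := by
    rw [transpose_nonsing_inv, transpose_mul, transpose_transpose]
  rw [dotProduct_mulVec_transpose_mul_mul, transpose_mul, transpose_transpose, hGramInvSymm,
    inv_mul_mul_transpose_add_smul_one Φ P hΦ hσ.ne' hS.isUnit]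
  simp only [Matrix.mul_assoc, add_mulVec, smul_mulVec, sub_mulVec, one_mulVec, dotProduct_add,
    dotProduct_smul, dotProduct_sub, smul_eq_mul]
  ring
end
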